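/- arXiv:2206.00830 — 3 statements merged into one kernel-verified Lean document; each statement's English description precedes it below -/
import Mathlib

section
/- Let X be a measurable space, let c ≥ 2, and let μ be a probability measure on X × Finset (Fin c) (the joint distribution of an instance and its candidate label set), with π : X × Finset (Fin c) → X the first projection. Let η : X → (Fin c → ℝ) assign to each instance a class-posterior probability vector, and let y : X → Fin c satisfy η x (y x) > η x j for every j ≠ y x. Define the margin u(x) = η x (y x) − max_{j ≠ y x} η x j. Fix constants 0 < ε < 1, α > 0, 0 < c_* ≤ c^*, and set l = c^*/c_*. Assume: (i) the pushforward of μ under u ∘ π equals the Lebesgue measure restricted to [0,1] with density d, where c_* ≤ d(t) ≤ c^* for all t ∈ [0,1]; (ii) (pure (e, f)-level set after purification) for μ-almost every (z, S), if u(z) ≥ e then every j ∈ S equals y z; (iii) (approximation) a function f : X → (Fin c → ℝ) satisfies, for every x ∈ X and every j ∈ Fin c, |f x j − η x j| ≤ α · μ({(z,S) : j ∈ S ∧ j ≠ y z} ∩ {(z,S) : u(z) ≥ u(x)}) / μ({(z,S) : u(z) ≥ u(x)}) + ε/6. Let e_new be a real number with e_new ≥ ε such that for every x with u(x) ≥ e_new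 one has e < η x (y x) ≤ 1 and (ε/(6 l α)) · (η x (y x) − e) ≤ e − e_new ≤ (ε/(3 l α)) · (η x (y x) − e). Then the level set L(e_new) = {x : u(x) ≥ e_new} is pure for f, i.e., for every x with u(x) ≥ e_new and every j ∈ Fin c, f x (y x) ≥ f x j; and moreover for every such x, η x (y x) − e_new ≥ (1 + ε/(6 α l)) · (η x (y x) − e). -/
/-!
Purity of `L(e)` says that almost every pair with a wrong surviving candidate label has margin
below `e`. Hence, inside `L(u x)`, the wrong-candidate mass lies in the margin band `[u x, e)`,
which by the density upper bound has mass at most `c^* (e - u x)`, while `L(u x)` itself has mass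
at least `c_* (1 - e)`. The choice of `e_new` makes the ratio at most `ε / (3 α)`, so on
`L(e_new)` the score `f` is within `ε / 2` of `η`, and a margin `u x ≥ e_new ≥ ε` keeps `y x` on
top. The growth of the purified region is immediate from the lower constraint on `e - e_new`.
-/

open MeasureTheory
open Set

section DensityBounds

variable {d : ℝ → ℝ} {cstar cStar : ℝ} {s : Set ℝ}

lemma withDensity_Icc_apply_le (hd : ∀ t ∈ Icc (0 : ℝ) 1, d t ≤ cStar) (hs : MeasurableSet s) :
    (volume.restrict (Icc (0 : ℝ) 1)).withDensity (fun t => ENNReal.ofReal (d t)) s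
      ≤ ENNReal.ofReal cStar * volume s := by
  rw [withDensity_apply _ hs, Measure.restrict_restrict hs]
  calc ∫⁻ t in s ∩ Icc 0 1, ENNReal.ofReal (d t)
      ≤ ∫⁻ _ in s ∩ Icc 0 1, ENNReal.ofReal cStar :=
        setLIntegral_mono measurable_const fun t ht => ENNReal.ofReal_le_ofReal (hd t ht.2)
    _ ≤ ENNReal.ofReal cStar * volume s := by
        rw [setLIntegral_const]
        gcongr
        exact inter_subset_left

lemma le_withDensity_Icc_apply (hd : ∀ t ∈ Icc (0 : ℝ) 1, cstar ≤ d t) (hs : MeasurableSet s)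
    (hs01 : s ⊆ Icc 0 1) :
    ENNReal.ofReal cstar * volume s
      ≤ (volume.restrict (Icc (0 : ℝ) 1)).withDensity (fun t => ENNReal.ofReal (d t)) s := by
  rw [withDensity_apply _ hs, Measure.restrict_restrict hs, inter_eq_left.2 hs01,
    ← setLIntegral_const]
  exact setLIntegral_mono' hs fun t ht => ENNReal.ofReal_le_ofReal (hd t (hs01 ht))

end DensityBounds

section MarginLaw

variable {Ω : Type*} [MeasurableSpace Ω] {μ : Measure Ω} {U : Ω → ℝ} {d : ℝ → ℝ}
  {cstar cStar : ℝ}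

lemma aemeasurable_of_map_eq_withDensity
    (hlaw : μ.map U =
      (volume.restrict (Icc (0 : ℝ) 1)).withDensity (fun t => ENNReal.ofReal (d t)))
    (hd : ∀ t ∈ Icc (0 : ℝ) 1, cstar ≤ d t) (hcstar : 0 < cstar) : AEMeasurable U μ := by
  refine AEMeasurable.of_map_ne_zero fun h0 => ?_
  have hpos := le_withDensity_Icc_apply hd measurableSet_Icc subset_rfl
  rw [← hlaw, h0, Measure.coe_zero, Pi.zero_apply, Real.volume_Icc, sub_zero, ENNReal.ofReal_one, mul_one,
    nonpos_iff_eq_zero, ENNReal.ofReal_eq_zero] at hpos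
  linarith

lemma measure_inter_preimage_Ici_le {B : Set Ω} {e : ℝ} (hB : ∀ᵐ ω ∂μ, e ≤ U ω → ω ∉ B)
    (a : ℝ) : μ (B ∩ U ⁻¹' Ici a) ≤ μ (U ⁻¹' Ico a e) := by
  refine measure_mono_ae ?_
  filter_upwards [hB] with ω hω ⟨hωB, hωa⟩
  exact ⟨hωa, not_le.1 fun he => hω he hωB⟩

lemma toReal_measure_inter_preimage_Ici_div_le [IsFiniteMeasure μ]
    (hlaw : μ.map U =
      (volume.restrict (Icc (0 : ℝ) 1)).withDensity (fun t => ENNReal.ofReal (d t)))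
    (hd : ∀ t ∈ Icc (0 : ℝ) 1, cstar ≤ d t ∧ d t ≤ cStar) (hcstar : 0 < cstar)
    (hcc : cstar ≤ cStar) {B : Set Ω} {a e : ℝ} (hB : ∀ᵐ ω ∂μ, e ≤ U ω → ω ∉ B)
    (ha : 0 ≤ a) (hae : a ≤ e) (he : e < 1) :
    (μ (B ∩ U ⁻¹' Ici a)).toReal / (μ (U ⁻¹' Ici a)).toReal
      ≤ cStar / cstar * ((e - a) / (1 - e)) := by
  have hU := aemeasurable_of_map_eq_withDensity hlaw (fun t ht => (hd t ht).1) hcstar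
  have hpre : ∀ s, MeasurableSet s → μ (U ⁻¹' s) =
      (volume.restrict (Icc (0 : ℝ) 1)).withDensity (fun t => ENNReal.ofReal (d t)) s :=
    fun s hs => by rw [← Measure.map_apply_of_aemeasurable hU hs, hlaw]
  have hnum : (μ (B ∩ U ⁻¹' Ici a)).toReal ≤ cStar * (e - a) := by
    refine ENNReal.toReal_le_of_le_ofReal (by nlinarith) ?_
    calc μ (B ∩ U ⁻¹' Ici a) ≤ μ (U ⁻¹' Ico a e) := measure_inter_preimage_Ici_le hB a
      _ ≤ ENNReal.ofReal cStar * volume (Ico a e) := by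
          rw [hpre _ measurableSet_Ico]
          exact withDensity_Icc_apply_le (fun t ht => (hd t ht).2) measurableSet_Ico
      _ = ENNReal.ofReal (cStar * (e - a)) := by
          rw [Real.volume_Ico, ENNReal.ofReal_mul (by linarith)]
  have hden : cstar * (1 - e) ≤ (μ (U ⁻¹' Ici a)).toReal := by
    rw [← ENNReal.ofReal_le_iff_le_toReal (measure_ne_top _ _)]
    calc ENNReal.ofReal (cstar * (1 - e)) ≤ ENNReal.ofReal cstar * volume (Icc a 1) := by
          rw [Real.volume_Icc, ← ENNReal.ofReal_mul hcstar.le]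
          gcongr
      _ ≤ μ (U ⁻¹' Icc a 1) := by
          rw [hpre _ measurableSet_Icc]
          exact le_withDensity_Icc_apply (fun t ht => (hd t ht).1) measurableSet_Icc
            (Icc_subset_Icc ha le_rfl)
      _ ≤ μ (U ⁻¹' Ici a) := measure_mono (preimage_mono Icc_subset_Ici_self)
  calc _ ≤ cStar * (e - a) / (cstar * (1 - e)) :=
        div_le_div₀ (by nlinarith) hnum (by nlinarith) hden
    _ = cStar / cstar * ((e - a) / (1 - e)) := mul_div_mul_comm _ _ _ _

lemma mul_toReal_measure_inter_preimage_Ici_div_le [IsFiniteMeasure μ]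
    (hlaw : μ.map U =
      (volume.restrict (Icc (0 : ℝ) 1)).withDensity (fun t => ENNReal.ofReal (d t)))
    (hd : ∀ t ∈ Icc (0 : ℝ) 1, cstar ≤ d t ∧ d t ≤ cStar) (hcstar : 0 < cstar)
    (hcc : cstar ≤ cStar) {B : Set Ω} {a e p α ε : ℝ} (hB : ∀ᵐ ω ∂μ, e ≤ U ω → ω ∉ B)
    (ha : 0 ≤ a) (hep : e < p) (hp : p ≤ 1) (hα : 0 < α) (hε : 0 ≤ ε)
    (hgap : e - a ≤ ε / (3 * (cStar / cstar) * α) * (p - e)) :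
    α * (μ (B ∩ U ⁻¹' Ici a)).toReal / (μ (U ⁻¹' Ici a)).toReal ≤ ε / 3 := by
  rcases le_or_gt e a with hea | hae
  · have hnull : μ (B ∩ U ⁻¹' Ici a) = 0 := by
      refine nonpos_iff_eq_zero.1 <| (measure_inter_preimage_Ici_le hB a).trans_eq ?_
      rw [Ico_eq_empty_of_le hea, preimage_empty, measure_empty]
    rw [hnull, ENNReal.toReal_zero, mul_zero, zero_div]
    positivity
  have hcStar : 0 < cStar := hcstar.trans_le hcc
  have hl : 0 < cStar / cstar := div_pos hcStar hcstar
  have hslack : (e - a) / (1 - e) ≤ ε / (3 * (cStar / cstar) * α) := by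
    rw [div_le_iff₀ (by linarith)]
    calc e - a ≤ ε / (3 * (cStar / cstar) * α) * (p - e) := hgap
      _ ≤ ε / (3 * (cStar / cstar) * α) * (1 - e) := by gcongr
  calc α * (μ (B ∩ U ⁻¹' Ici a)).toReal / (μ (U ⁻¹' Ici a)).toReal
      = α * ((μ (B ∩ U ⁻¹' Ici a)).toReal / (μ (U ⁻¹' Ici a)).toReal) := mul_div_assoc _ _ _
    _ ≤ α * (cStar / cstar * (ε / (3 * (cStar / cstar) * α))) := by
        gcongr
        exact (toReal_measure_inter_preimage_Ici_div_le hlaw hd hcstar hcc hB ha hae.le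
          (hep.trans_le hp)).trans (mul_le_mul_of_nonneg_left hslack hl.le)
    _ = ε / 3 := by field_simp

end MarginLaw

theorem pure_level_set_growth_general
    {X : Type*} [MeasurableSpace X] (c : ℕ)
    [MeasurableSpace (Finset (Fin c))]
    (μ : Measure (X × Finset (Fin c))) [IsProbabilityMeasure μ]
    -- class-posterior probability vectors
    (η : X → Fin c → ℝ)
    (y : X → Fin c)
    -- the margin: η x (y x) − u x is the largest posterior among labels ≠ y x
    (u : X → ℝ)
    (hu : ∀ x, IsGreatest ((fun j => η x j) '' {j | j ≠ y x}) (η x (y x) - u x))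
    -- constants
    (ε α cstar cStar l e : ℝ)
    (hε0 : 0 < ε) (hα : 0 < α)
    (hcstar : 0 < cstar) (hcc : cstar ≤ cStar) (hl : l = cStar / cstar)
    -- (i) margin density assumption: the law of the margin is `d · Leb|_{[0,1]}`
    (d : ℝ → ℝ)
    (hlaw : μ.map (fun zS => u zS.1) =
      (volume.restrict (Set.Icc (0 : ℝ) 1)).withDensity (fun t => ENNReal.ofReal (d t)))
    (hd : ∀ t ∈ Set.Icc (0 : ℝ) 1, cstar ≤ d t ∧ d t ≤ cStar)
    -- (ii) pure (e,f)-level set after purification: almost surely, every surviving candidate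
    -- label of an instance with margin at least `e` is the true label
    (hpure : ∀ᵐ zS ∂μ, u zS.1 ≥ e → ∀ j ∈ zS.2, j = y zS.1)
    -- (iii) approximation guarantee for the scoring function `f`
    (f : X → Fin c → ℝ)
    (happrox : ∀ x, ∀ j : Fin c,
      |f x j - η x j| ≤
        α * (μ ({zS | j ∈ zS.2 ∧ j ≠ y zS.1} ∩ {zS | u zS.1 ≥ u x})).toReal /
          (μ {zS | u zS.1 ≥ u x}).toReal + ε / 6)
    -- choice of the new threshold
    (e_new : ℝ) (he_new : e_new ≥ ε)
    (hchoice : ∀ x, u x ≥ e_new →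
      e < η x (y x) ∧ η x (y x) ≤ 1 ∧
      ε / (6 * l * α) * (η x (y x) - e) ≤ e - e_new ∧
      e - e_new ≤ ε / (3 * l * α) * (η x (y x) - e)) :
    -- conclusion: L(e_new) is pure for f, and the purified region grows by 1 + ε/(6αl)
    (∀ x, u x ≥ e_new → ∀ j : Fin c, f x (y x) ≥ f x j) ∧
    (∀ x, u x ≥ e_new →
      η x (y x) - e_new ≥ (1 + ε / (6 * α * l)) * (η x (y x) - e)) := by
  subst hl
  have hwrong : ∀ j, ∀ᵐ zS ∂μ, e ≤ u zS.1 →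
      zS ∉ {zS : X × Finset (Fin c) | j ∈ zS.2 ∧ j ≠ y zS.1} :=
    fun j => hpure.mono fun zS hzS he ⟨hj, hne⟩ => hne (hzS he j hj)
  have hclose : ∀ x, u x ≥ e_new → ∀ j, |f x j - η x j| ≤ ε / 2 := by
    intro x hx j
    obtain ⟨hηe, hη1, -, hgap⟩ := hchoice x hx
    have hcorr := mul_toReal_measure_inter_preimage_Ici_div_le
      (U := fun zS : X × Finset (Fin c) => u zS.1) (a := u x) hlaw hd hcstar hcc (hwrong j)
      (by linarith) hηe hη1 hα hε0.le (by linarith)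
    calc |f x j - η x j| ≤ _ := happrox x j
      _ ≤ ε / 3 + ε / 6 := add_le_add hcorr le_rfl
      _ = ε / 2 := by ring
  refine ⟨fun x hx j => ?_, fun x hx => ?_⟩
  · rcases eq_or_ne j (y x) with rfl | hj
    · exact le_rfl
    have hmargin : η x j ≤ η x (y x) - u x := (hu x).2 ⟨j, hj, rfl⟩
    linarith [abs_le.1 (hclose x hx j), abs_le.1 (hclose x hx (y x))]
  · obtain ⟨-, -, hlow, -⟩ := hchoice x hx
    rw [mul_right_comm 6 α]
    linarith

/-- Theorem 1 of the paper: given a pure `(e,f)`-level set (hypothesis `hpure`, almost surely no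
incorrect candidate label survives on the region of margin at least `e`), an approximation
guarantee for the scoring function `f` (hypothesis `happrox`), and the margin density assumption
(hypotheses `hlaw`, `hd`), a new threshold `e_new` chosen with
`(ε/(6lα))·(p(yˣ|x) − e) ≤ e − e_new ≤ (ε/(3lα))·(p(yˣ|x) − e)` yields a level set `L(e_new)`
that is again pure for `f`, and the purified region grows by the factor `1 + ε/(6αl)`. -/
theorem pure_level_set_growth
    {X : Type*} [MeasurableSpace X] (c : ℕ) (hc : 2 ≤ c)
    [MeasurableSpace (Finset (Fin c))]
    (μ : Measure (X × Finset (Fin c))) [IsProbabilityMeasure μ]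
    -- class-posterior probability vectors
    (η : X → Fin c → ℝ)
    (hη_nonneg : ∀ x j, 0 ≤ η x j) (hη_sum : ∀ x, ∑ j, η x j = 1)
    -- the Bayes-optimal (true) label has strictly highest posterior
    (y : X → Fin c) (hy : ∀ x, ∀ j, j ≠ y x → η x j < η x (y x))
    -- the margin: η x (y x) − u x is the largest posterior among labels ≠ y x
    (u : X → ℝ)
    (hu : ∀ x, IsGreatest ((fun j => η x j) '' {j | j ≠ y x}) (η x (y x) - u x))
    -- constants
    (ε α cstar cStar l e : ℝ)
    (hε0 : 0 < ε) (hε1 : ε < 1) (hα : 0 < α)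
    (hcstar : 0 < cstar) (hcc : cstar ≤ cStar) (hl : l = cStar / cstar)
    -- (i) margin density assumption: the law of the margin is `d · Leb|_{[0,1]}`
    (d : ℝ → ℝ)
    (hlaw : μ.map (fun zS => u zS.1) =
      (volume.restrict (Set.Icc (0 : ℝ) 1)).withDensity (fun t => ENNReal.ofReal (d t)))
    (hd : ∀ t ∈ Set.Icc (0 : ℝ) 1, cstar ≤ d t ∧ d t ≤ cStar)
    -- (ii) pure (e,f)-level set after purification: almost surely, every surviving candidate
    -- label of an instance with margin at least `e` is the true label
    (hpure : ∀ᵐ zS ∂μ, u zS.1 ≥ e → ∀ j ∈ zS.2, j = y zS.1)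
    -- (iii) approximation guarantee for the scoring function `f`
    (f : X → Fin c → ℝ)
    (happrox : ∀ x, ∀ j : Fin c,
      |f x j - η x j| ≤
        α * (μ ({zS | j ∈ zS.2 ∧ j ≠ y zS.1} ∩ {zS | u zS.1 ≥ u x})).toReal /
          (μ {zS | u zS.1 ≥ u x}).toReal + ε / 6)
    -- choice of the new threshold
    (e_new : ℝ) (he_new : e_new ≥ ε)
    (hchoice : ∀ x, u x ≥ e_new →
      e < η x (y x) ∧ η x (y x) ≤ 1 ∧
      ε / (6 * l * α) * (η x (y x) - e) ≤ e - e_new ∧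
      e - e_new ≤ ε / (3 * l * α) * (η x (y x) - e)) :
    -- conclusion: L(e_new) is pure for f, and the purified region grows by 1 + ε/(6αl)
    (∀ x, u x ≥ e_new → ∀ j : Fin c, f x (y x) ≥ f x j) ∧
    (∀ x, u x ≥ e_new →
      η x (y x) - e_new ≥ (1 + ε / (6 * α * l)) * (η x (y x) - e)) :=
  pure_level_set_growth_general c μ η y u hu ε α cstar cStar l e hε0 hα hcstar hcc hl d hlaw hd
    hpure f happrox e_new he_new hchoice
end

section
/- Let μ be a probability measure on a measurable space Ω and let U : Ω → ℝ be measurable such that the law of U equals the Lebesgue measure restricted to [0,1] with density d, where c_* ≤ d(t) ≤ c^* for all t ∈ [0,1] and 0 < c_* ≤ c^*. Let A ⊆ Ω be a measurable set and let s, e, p be real numbers with 0 ≤ s ≤ e < p ≤ 1, and suppose μ(A ∩ {ω : U(ω) ≥ e}) = 0. Then μ({ω : U(ω) ≥ s}) > 0 and μ(A ∩ {ω : U(ω) ≥ s}) / μ({ω : U(ω) ≥ s}) ≤ c^* · (e − s) / (c_* · (p − e)). Moreover, if in addition α > 0, ε > 0, l = c^*/c_*, and e − s ≤ (ε/(3 l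 α)) · (p − e), then μ(A ∩ {ω : U(ω) ≥ s}) / μ({ω : U(ω) ≥ s}) ≤ ε/(3α). -/
open MeasureTheory Set

/-!
Pushed forward by `U`, the bounds on the density sandwich `μ.map U` between `c_* • Leb` and
`c^* • Leb` on `[0, 1]`. Up to the null set `A ∩ {U ≥ e}`, the event `A ∩ {U ≥ s}` lies in
`{s ≤ U < e}`, of mass at most `c^* (e - s)`, while `{U ≥ s}` contains `{e ≤ U ≤ p}`, of mass at
least `c_* (p - e)`.
-/

lemma withDensity_ofReal_le_smul {α : Type*} [MeasurableSpace α] {ν : Measure α} {d : α → ℝ}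
    {C : ℝ} (hd : ∀ᵐ t ∂ν, d t ≤ C) :
    ν.withDensity (fun t => ENNReal.ofReal (d t)) ≤ ENNReal.ofReal C • ν := by
  rw [← withDensity_const]
  exact withDensity_mono (hd.mono fun _ ht => ENNReal.ofReal_le_ofReal ht)

lemma smul_le_withDensity_ofReal {α : Type*} [MeasurableSpace α] {ν : Measure α} {d : α → ℝ}
    {c : ℝ} (hd : ∀ᵐ t ∂ν, c ≤ d t) :
    ENNReal.ofReal c • ν ≤ ν.withDensity (fun t => ENNReal.ofReal (d t)) := by
  rw [← withDensity_const]
  exact withDensity_mono (hd.mono fun _ ht => ENNReal.ofReal_le_ofReal ht)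

section MarginLaw

variable {Ω : Type*} [MeasurableSpace Ω] {μ : Measure Ω} {U : Ω → ℝ} {I : Set ℝ} {c C : ℝ}

lemma measure_preimage_le_of_map_le (hU : Measurable U)
    (hup : μ.map U ≤ ENNReal.ofReal C • volume.restrict I) {S : Set ℝ} (hS : MeasurableSet S) :
    μ (U ⁻¹' S) ≤ ENNReal.ofReal C * volume S := by
  rw [← Measure.map_apply hU hS]
  exact (hup S).trans (mul_le_mul_right (Measure.restrict_apply_le _ _) _)

lemma le_measure_preimage_of_le_map (hU : Measurable U)
    (hlow : ENNReal.ofReal c • volume.restrict I ≤ μ.map U) {S : Set ℝ} (hS : MeasurableSet S)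
    (hSI : S ⊆ I) : ENNReal.ofReal c * volume S ≤ μ (U ⁻¹' S) := by
  rw [← Measure.map_apply hU hS]
  simpa [Measure.restrict_apply hS, inter_eq_left.2 hSI] using hlow S

lemma measure_inter_setOf_ge_le (hU : Measurable U)
    (hup : μ.map U ≤ ENNReal.ofReal C • volume.restrict I) (hC : 0 ≤ C) {A : Set Ω} {e : ℝ}
    (hnull : μ (A ∩ {ω | U ω ≥ e}) = 0) (s : ℝ) :
    μ (A ∩ {ω | U ω ≥ s}) ≤ ENNReal.ofReal (C * (e - s)) := by
  have hsplit : A ∩ {ω | U ω ≥ s} ⊆ (A ∩ {ω | U ω ≥ e}) ∪ U ⁻¹' Ico s e := by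
    rintro ω ⟨hωA, hωs⟩
    by_cases h : U ω ≥ e
    · exact Or.inl ⟨hωA, h⟩
    · exact Or.inr ⟨hωs, lt_of_not_ge h⟩
  calc μ (A ∩ {ω | U ω ≥ s})
      ≤ μ (A ∩ {ω | U ω ≥ e}) + μ (U ⁻¹' Ico s e) :=
        (measure_mono hsplit).trans (measure_union_le _ _)
    _ = μ (U ⁻¹' Ico s e) := by rw [hnull, zero_add]
    _ ≤ ENNReal.ofReal C * volume (Ico s e) :=
        measure_preimage_le_of_map_le hU hup measurableSet_Ico
    _ = ENNReal.ofReal (C * (e - s)) := by rw [Real.volume_Ico, ENNReal.ofReal_mul hC]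

lemma ofReal_mul_le_measure_setOf_ge (hU : Measurable U)
    (hlow : ENNReal.ofReal c • volume.restrict I ≤ μ.map U) {s e p : ℝ} (hse : s ≤ e)
    (hep : e ≤ p) (hI : Icc e p ⊆ I) :
    ENNReal.ofReal (c * (p - e)) ≤ μ {ω | U ω ≥ s} := by
  calc ENNReal.ofReal (c * (p - e))
      = ENNReal.ofReal c * volume (Icc e p) := by
        rw [Real.volume_Icc, ENNReal.ofReal_mul' (sub_nonneg.2 hep)]
    _ ≤ μ (U ⁻¹' Icc e p) := le_measure_preimage_of_le_map hU hlow measurableSet_Icc hI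
    _ ≤ μ {ω | U ω ≥ s} := measure_mono fun ω hω => hse.trans hω.1

end MarginLaw

lemma ENNReal.toReal_div_toReal_le {a b : ENNReal} {x y : ℝ} (hx : 0 ≤ x) (hy : 0 < y)
    (ha : a ≤ ENNReal.ofReal x) (hb : ENNReal.ofReal y ≤ b) (hb_top : b ≠ ⊤) :
    a.toReal / b.toReal ≤ x / y :=
  div_le_div₀ hx (ENNReal.toReal_le_of_le_ofReal hx ha) hy
    ((ENNReal.ofReal_le_iff_le_toReal hb_top).1 hb)

lemma mul_div_mul_le_div_of_le {c C α ε r q : ℝ} (hc : 0 < c) (hC : 0 < C) (hα : 0 < α)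
    (hq : 0 < q) (h : r ≤ ε / (3 * (C / c) * α) * q) : C * r / (c * q) ≤ ε / (3 * α) := by
  rw [div_le_div_iff₀ (by positivity) (by positivity)]
  calc C * r * (3 * α) ≤ C * (ε / (3 * (C / c) * α) * q) * (3 * α) := by gcongr
    _ = ε * (c * q) := by field_simp

theorem conditional_error_bound_general {Ω : Type*} [MeasurableSpace Ω]
    (μ : Measure Ω) [IsProbabilityMeasure μ]
    (U : Ω → ℝ) (hU : Measurable U)
    (d : ℝ → ℝ) (cstar cStar : ℝ) (hc0 : 0 < cstar) (hcc : cstar ≤ cStar)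
    (hlaw : μ.map U =
      (volume.restrict (Set.Icc (0 : ℝ) 1)).withDensity (fun t => ENNReal.ofReal (d t)))
    (hd : ∀ t ∈ Set.Icc (0 : ℝ) 1, cstar ≤ d t ∧ d t ≤ cStar)
    (A : Set Ω)
    (s e p : ℝ) (hs : 0 ≤ s) (hse : s ≤ e) (hep : e < p) (hp : p ≤ 1)
    (hnull : μ (A ∩ {ω | U ω ≥ e}) = 0) :
    0 < μ {ω | U ω ≥ s} ∧
      (μ (A ∩ {ω | U ω ≥ s})).toReal / (μ {ω | U ω ≥ s}).toReal ≤
        cStar * (e - s) / (cstar * (p - e)) ∧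
      ∀ α ε l : ℝ, 0 < α → 0 < ε → l = cStar / cstar →
        e - s ≤ ε / (3 * l * α) * (p - e) →
        (μ (A ∩ {ω | U ω ≥ s})).toReal / (μ {ω | U ω ≥ s}).toReal ≤ ε / (3 * α) := by
  have hcS : 0 < cStar := hc0.trans_le hcc
  have hd_ae : ∀ᵐ t ∂volume.restrict (Icc (0 : ℝ) 1), cstar ≤ d t ∧ d t ≤ cStar :=
    (ae_restrict_mem measurableSet_Icc).mono hd
  have hlow := hlaw ▸ smul_le_withDensity_ofReal (hd_ae.mono fun _ h => h.1)
  have hup := hlaw ▸ withDensity_ofReal_le_smul (hd_ae.mono fun _ h => h.2)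
  have hden := ofReal_mul_le_measure_setOf_ge hU hlow hse hep.le
    (Icc_subset_Icc (hs.trans hse) hp)
  have hnum := measure_inter_setOf_ge_le hU hup hcS.le hnull s
  have hgap : 0 < p - e := sub_pos.2 hep
  have hratio := ENNReal.toReal_div_toReal_le
    (mul_nonneg hcS.le (sub_nonneg.2 hse)) (by positivity) hnum hden
    (measure_ne_top μ _)
  refine ⟨(ENNReal.ofReal_pos.2 (by positivity)).trans_le hden, hratio, ?_⟩
  rintro α ε l hα - rfl hclose
  exact hratio.trans (mul_div_mul_le_div_of_le hc0 hcS hα hgap hclose)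

/-- Eq. (2)–(3) of the paper: under the margin density assumption, if the event `A` is null on
`{U ≥ e}` and `0 ≤ s ≤ e < p ≤ 1`, then the conditional probability of `A` given `{U ≥ s}`
is at most `c^*·(e − s) / (c_*·(p − e))`; if moreover `e − s ≤ (ε/(3lα))·(p − e)` with
`l = c^*/c_*`, this conditional probability is at most `ε/(3α)`. -/
theorem conditional_error_bound {Ω : Type*} [MeasurableSpace Ω]
    (μ : Measure Ω) [IsProbabilityMeasure μ]
    (U : Ω → ℝ) (hU : Measurable U)
    (d : ℝ → ℝ) (cstar cStar : ℝ) (hc0 : 0 < cstar) (hcc : cstar ≤ cStar)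
    (hlaw : μ.map U =
      (volume.restrict (Set.Icc (0 : ℝ) 1)).withDensity (fun t => ENNReal.ofReal (d t)))
    (hd : ∀ t ∈ Set.Icc (0 : ℝ) 1, cstar ≤ d t ∧ d t ≤ cStar)
    (A : Set Ω) (hA : MeasurableSet A)
    (s e p : ℝ) (hs : 0 ≤ s) (hse : s ≤ e) (hep : e < p) (hp : p ≤ 1)
    (hnull : μ (A ∩ {ω | U ω ≥ e}) = 0) :
    0 < μ {ω | U ω ≥ s} ∧
      (μ (A ∩ {ω | U ω ≥ s})).toReal / (μ {ω | U ω ≥ s}).toReal ≤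
        cStar * (e - s) / (cstar * (p - e)) ∧
      ∀ α ε l : ℝ, 0 < α → 0 < ε → l = cStar / cstar →
        e - s ≤ ε / (3 * l * α) * (p - e) →
        (μ (A ∩ {ω | U ω ≥ s})).toReal / (μ {ω | U ω ≥ s}).toReal ≤ ε / (3 * α) :=
  conditional_error_bound_general μ U hU d cstar cStar hc0 hcc hlaw hd A s e p hs hse hep hp hnull
end

section
/- Let c ≥ 2, let p : Fin c → ℝ be a class-posterior probability vector, and let y ∈ Fin c satisfy p y ≥ p j' for all j'. Let f : Fin c → ℝ and ε ≥ 0 satisfy |f j' − p j'| ≤ ε/2 for all j' ∈ Fin c. If m, j ∈ Fin c and e is a real number with f m − f j ≥ e + ε, then p y ≥ p j + e. In particular, if e > 0 then j ≠ y. -/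
/-- Appendix A.2 (Eq. (5)): if the score of label `j` falls at least `e + ε` below the score
`f m` of an `ε/2`-accurate scoring function `f`, then the posterior of `j` is at least `e`
below the posterior of the true label `y`; in particular, for `e > 0`, `j` is incorrect. -/
theorem purification_rule_correct (c : ℕ) (hc : 2 ≤ c)
    (p : Fin c → ℝ) (hp_nonneg : ∀ j', 0 ≤ p j') (hp_sum : ∑ j', p j' = 1)
    (y : Fin c) (hy : ∀ j', p j' ≤ p y)
    (f : Fin c → ℝ) (ε : ℝ) (hε : 0 ≤ ε)
    (hf : ∀ j', |f j' - p j'| ≤ ε / 2)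
    (m j : Fin c) (e : ℝ) (hgap : f m - f j ≥ e + ε) :
    p y ≥ p j + e ∧ (0 < e → j ≠ y) := by
  have h1 := abs_le.mp (hf m)
  have h2 := abs_le.mp (hf j)
  have hm := hy m
  have key : p y ≥ p j + e := by linarith [h1.1, h1.2, h2.1, h2.2]
  refine ⟨key, fun he hjy => ?_⟩
  subst hjy
  linarith
end
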